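/- (Value of ℓ in type G_2.) (a) For all nonzero dominant vectors h, λ ∈ ℝ², every composition w of at most 2 of the simple reflections s₁, s₂ of type G_2 satisfies ⟨w λ, h⟩ ≥ 0. (b) For every strictly dominant λ ∈ ℝ², one has ⟨(s₁ ∘ s₂ ∘ s₁) λ, ϖ₁⟩ < 0 and ⟨(s₂ ∘ s₁ ∘ s₂) λ, ϖ₂⟩ < 0. Consequently, ℓ_{ϖ₁}⁻(λ) = ℓ_{ϖ₂}⁻(λ) = 3 for every strictly dominant λ, and the minimum of ℓ_h⁻(λ) over all pairs of nonzero dominant vectors h, λ equals 3. -/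

import Mathlib

open scoped RealInnerProductSpace

/-- The simple root `α₁ = (1, 0)` of type `G₂`. -/
noncomputable def g2a1 : EuclideanSpace ℝ (Fin 2) :=
  WithLp.toLp 2 (fun i : Fin 2 => if (i : ℕ) = 0 then (1 : ℝ) else 0)

/-- The simple root `α₂ = (−3/2, √3/2)` of type `G₂`. -/
noncomputable def g2a2 : EuclideanSpace ℝ (Fin 2) :=
  WithLp.toLp 2 (fun i : Fin 2 => if (i : ℕ) = 0 then -(3 / 2) else Real.sqrt 3 / 2)

/-- The orthogonal reflection of `ℝ²` in the line orthogonal to `a`. -/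
noncomputable def reflG (a : EuclideanSpace ℝ (Fin 2)) (v : EuclideanSpace ℝ (Fin 2)) :
    EuclideanSpace ℝ (Fin 2) :=
  v - (2 * ⟪v, a⟫ / ⟪a, a⟫) • a

/-- The simple reflections `s₁, s₂` of type `G₂`. -/
noncomputable def sG (j : ℕ) : EuclideanSpace ℝ (Fin 2) → EuclideanSpace ℝ (Fin 2) :=
  if j = 1 then reflG g2a1 else reflG g2a2

/-- The composition of the simple reflections indexed by the entries of `l`
(the last entry of the list is applied first). -/
noncomputable def compG (l : List ℕ) : EuclideanSpace ℝ (Fin 2) → EuclideanSpace ℝ (Fin 2) :=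
  l.foldr (fun j g => sG j ∘ g) id

/-- The fundamental weight `ϖ₁ = 2α₁ + α₂` of type `G₂`. -/
noncomputable def g2w1 : EuclideanSpace ℝ (Fin 2) := (2 : ℝ) • g2a1 + g2a2

/-- The fundamental weight `ϖ₂ = 3α₁ + 2α₂` of type `G₂`. -/
noncomputable def g2w2 : EuclideanSpace ℝ (Fin 2) := (3 : ℝ) • g2a1 + (2 : ℝ) • g2a2

/-- `v` is dominant: `⟪v, α₁⟫ ≥ 0` and `⟪v, α₂⟫ ≥ 0`. -/
def g2dom (v : EuclideanSpace ℝ (Fin 2)) : Prop := 0 ≤ ⟪v, g2a1⟫ ∧ 0 ≤ ⟪v, g2a2⟫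

/-- `v` is strictly dominant: `⟪v, α₁⟫ > 0` and `⟪v, α₂⟫ > 0`. -/
def g2sdom (v : EuclideanSpace ℝ (Fin 2)) : Prop := 0 < ⟪v, g2a1⟫ ∧ 0 < ⟪v, g2a2⟫

/-!
In the coordinates `(⟪v, α₁⟫, ⟪v, α₂⟫)` the simple reflections act by integer matrices, and since
`ϖ₁, ϖ₂` are dual to `α₁, α₂` up to the factors `1/2, 3/2`, every pairing splits as
`⟪u, h⟫ = 2 ⟪h, α₁⟫ ⟪u, ϖ₁⟫ + (2/3) ⟪h, α₂⟫ ⟪u, ϖ₂⟫`. For dominant `h` it therefore suffices to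
pair `w λ` with `ϖ₁` and `ϖ₂`: for the seven words `w` of length at most 2 these pairings are
linear forms in `⟪λ, α₁⟫, ⟪λ, α₂⟫` with nonnegative coefficients, whereas `s₁ s₂ s₁` and
`s₂ s₁ s₂` turn the pairings with `ϖ₁` and `ϖ₂` into `-⟪λ, α₁⟫` and `-⟪λ, α₂⟫`.
-/

lemma inner_eq_coords (x y : EuclideanSpace ℝ (Fin 2)) : ⟪x, y⟫ = x 0 * y 0 + x 1 * y 1 := by
  simp only [PiLp.inner_apply, RCLike.inner_apply, Real.ringHom_apply, Fin.sum_univ_two]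
  ring

lemma sqrt_three_mul_self : Real.sqrt 3 * Real.sqrt 3 = 3 := Real.mul_self_sqrt (by norm_num)

lemma inner_g2a1_self : ⟪g2a1, g2a1⟫ = 1 := by
  rw [inner_eq_coords]
  norm_num [g2a1]

lemma inner_g2a1_g2a2 : ⟪g2a1, g2a2⟫ = -(3 / 2) := by
  rw [inner_eq_coords]
  norm_num [g2a1, g2a2]

lemma inner_g2a2_g2a1 : ⟪g2a2, g2a1⟫ = -(3 / 2) := by
  rw [real_inner_comm, inner_g2a1_g2a2]

lemma inner_g2a2_self : ⟪g2a2, g2a2⟫ = 3 := by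
  simp only [inner_eq_coords, g2a2]
  norm_num [div_mul_div_comm, sqrt_three_mul_self]

lemma inner_reflG_left (a v w : EuclideanSpace ℝ (Fin 2)) :
    ⟪reflG a v, w⟫ = ⟪v, w⟫ - 2 * ⟪v, a⟫ / ⟪a, a⟫ * ⟪a, w⟫ := by
  rw [reflG, inner_sub_left, real_inner_smul_left]

section Reflections

variable (v : EuclideanSpace ℝ (Fin 2))

lemma inner_sG_one_g2a1 : ⟪sG 1 v, g2a1⟫ = -⟪v, g2a1⟫ := by
  rw [sG, if_pos rfl, inner_reflG_left, inner_g2a1_self]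
  ring

lemma inner_sG_one_g2a2 : ⟪sG 1 v, g2a2⟫ = ⟪v, g2a2⟫ + 3 * ⟪v, g2a1⟫ := by
  rw [sG, if_pos rfl, inner_reflG_left, inner_g2a1_self, inner_g2a1_g2a2]
  ring

lemma inner_sG_two_g2a1 : ⟪sG 2 v, g2a1⟫ = ⟪v, g2a1⟫ + ⟪v, g2a2⟫ := by
  rw [sG, if_neg (by norm_num), inner_reflG_left, inner_g2a2_self, inner_g2a2_g2a1]
  ring

lemma inner_sG_two_g2a2 : ⟪sG 2 v, g2a2⟫ = -⟪v, g2a2⟫ := by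
  rw [sG, if_neg (by norm_num), inner_reflG_left, inner_g2a2_self]
  ring

lemma inner_g2w1_right : ⟪v, g2w1⟫ = 2 * ⟪v, g2a1⟫ + ⟪v, g2a2⟫ := by
  rw [g2w1, inner_add_right, real_inner_smul_right]

lemma inner_g2w2_right : ⟪v, g2w2⟫ = 3 * ⟪v, g2a1⟫ + 2 * ⟪v, g2a2⟫ := by
  rw [g2w2, inner_add_right, real_inner_smul_right, real_inner_smul_right]

end Reflections

lemma inner_eq_fundamental_expansion (u h : EuclideanSpace ℝ (Fin 2)) :
    ⟪u, h⟫ = 2 * ⟪h, g2a1⟫ * ⟪u, g2w1⟫ + 2 / 3 * ⟪h, g2a2⟫ * ⟪u, g2w2⟫ := by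
  rw [inner_g2w1_right, inner_g2w2_right]
  simp only [inner_eq_coords, g2a1, g2a2]
  norm_num
  linear_combination (-(u 1 * h 1) / 3) * sqrt_three_mul_self

lemma inner_nonneg_of_g2dom {u h : EuclideanSpace ℝ (Fin 2)} (hh : g2dom h)
    (h₁ : 0 ≤ ⟪u, g2w1⟫) (h₂ : 0 ≤ ⟪u, g2w2⟫) : 0 ≤ ⟪u, h⟫ := by
  obtain ⟨hh₁, hh₂⟩ := hh
  rw [inner_eq_fundamental_expansion]
  positivity

lemma g2dom_of_g2sdom {v : EuclideanSpace ℝ (Fin 2)} (hv : g2sdom v) : g2dom v :=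
  ⟨hv.1.le, hv.2.le⟩

lemma inner_g2w1_g2a1 : ⟪g2w1, g2a1⟫ = 1 / 2 := by
  rw [real_inner_comm, inner_g2w1_right, inner_g2a1_self, inner_g2a1_g2a2]
  norm_num

lemma g2dom_g2w1 : g2dom g2w1 := by
  refine ⟨by rw [inner_g2w1_g2a1]; norm_num, ?_⟩
  rw [real_inner_comm, inner_g2w1_right, inner_g2a2_g2a1, inner_g2a2_self]
  norm_num

lemma g2w1_ne_zero : g2w1 ≠ 0 := by
  intro h
  have := inner_g2w1_g2a1
  rw [h, inner_zero_left] at this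
  norm_num at this

lemma g2dom_g2w2 : g2dom g2w2 := by
  constructor
  · rw [real_inner_comm, inner_g2w2_right, inner_g2a1_self, inner_g2a1_g2a2]
    norm_num
  · rw [real_inner_comm, inner_g2w2_right, inner_g2a2_g2a1, inner_g2a2_self]
    norm_num

lemma compG_cons (j : ℕ) (l : List ℕ) (v : EuclideanSpace ℝ (Fin 2)) :
    compG (j :: l) v = sG j (compG l v) := rfl

lemma compG_nil (v : EuclideanSpace ℝ (Fin 2)) : compG [] v = v := rfl

lemma mem_words_of_length_le_two {l : List ℕ} (hl : ∀ m ∈ l, m = 1 ∨ m = 2)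
    (hlen : l.length ≤ 2) : l ∈ [[], [1], [2], [1, 1], [1, 2], [2, 1], [2, 2]] := by
  rcases l with _ | ⟨a, _ | ⟨b, _ | ⟨c, l⟩⟩⟩
  · simp
  · rcases hl a (by simp) with rfl | rfl <;> simp
  · rcases hl a (by simp) with rfl | rfl <;> rcases hl b (by simp) with rfl | rfl <;> simp
  · simp at hlen

lemma inner_compG_fundamental_nonneg {lam : EuclideanSpace ℝ (Fin 2)} (hlam : g2dom lam)
    {l : List ℕ} (hl : ∀ m ∈ l, m = 1 ∨ m = 2) (hlen : l.length ≤ 2) :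
    0 ≤ ⟪compG l lam, g2w1⟫ ∧ 0 ≤ ⟪compG l lam, g2w2⟫ := by
  obtain ⟨hp, hq⟩ := hlam
  have hword := mem_words_of_length_le_two hl hlen
  simp only [List.mem_cons, List.not_mem_nil, or_false] at hword
  rcases hword with rfl | rfl | rfl | rfl | rfl | rfl | rfl <;>
  · simp only [compG_cons, compG_nil, inner_g2w1_right, inner_g2w2_right, inner_sG_one_g2a1,
      inner_sG_one_g2a2, inner_sG_two_g2a1, inner_sG_two_g2a2]
    constructor <;> linarith

lemma inner_compG_nonneg {h lam : EuclideanSpace ℝ (Fin 2)} (hh : g2dom h) (hlam : g2dom lam)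
    {l : List ℕ} (hl : ∀ m ∈ l, m = 1 ∨ m = 2) (hlen : l.length ≤ 2) :
    0 ≤ ⟪compG l lam, h⟫ :=
  have hw := inner_compG_fundamental_nonneg hlam hl hlen
  inner_nonneg_of_g2dom hh hw.1 hw.2

lemma three_le_length_of_inner_compG_neg {h lam : EuclideanSpace ℝ (Fin 2)} (hh : g2dom h)
    (hlam : g2dom lam) {l : List ℕ} (hl : ∀ m ∈ l, m = 1 ∨ m = 2)
    (hneg : ⟪compG l lam, h⟫ < 0) : 3 ≤ l.length := by
  by_contra! hlen
  exact hneg.not_ge (inner_compG_nonneg hh hlam hl (by omega))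

lemma inner_compG_121_g2w1 (lam : EuclideanSpace ℝ (Fin 2)) :
    ⟪compG [1, 2, 1] lam, g2w1⟫ = -⟪lam, g2a1⟫ := by
  simp only [compG_cons, compG_nil, inner_g2w1_right, inner_sG_one_g2a1, inner_sG_one_g2a2,
    inner_sG_two_g2a1, inner_sG_two_g2a2]
  ring

lemma inner_compG_212_g2w2 (lam : EuclideanSpace ℝ (Fin 2)) :
    ⟪compG [2, 1, 2] lam, g2w2⟫ = -⟪lam, g2a2⟫ := by
  simp only [compG_cons, compG_nil, inner_g2w2_right, inner_sG_one_g2a1, inner_sG_one_g2a2,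
    inner_sG_two_g2a1, inner_sG_two_g2a2]
  ring

theorem statement19 :
    (∀ h lam : EuclideanSpace ℝ (Fin 2), g2dom h → h ≠ 0 → g2dom lam → lam ≠ 0 →
      ∀ l : List ℕ, (∀ m ∈ l, m = 1 ∨ m = 2) → l.length ≤ 2 →
        0 ≤ ⟪compG l lam, h⟫) ∧
    (∀ lam : EuclideanSpace ℝ (Fin 2), g2sdom lam →
      ⟪compG [1, 2, 1] lam, g2w1⟫ < 0 ∧ ⟪compG [2, 1, 2] lam, g2w2⟫ < 0) ∧
    (∀ lam : EuclideanSpace ℝ (Fin 2), g2sdom lam →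
      IsLeast {k : ℕ | ∃ l : List ℕ, (∀ m ∈ l, m = 1 ∨ m = 2) ∧ l.length = k ∧
          ⟪compG l lam, g2w1⟫ < 0} 3 ∧
      IsLeast {k : ℕ | ∃ l : List ℕ, (∀ m ∈ l, m = 1 ∨ m = 2) ∧ l.length = k ∧
          ⟪compG l lam, g2w2⟫ < 0} 3) ∧
    IsLeast {k : ℕ | ∃ h lam : EuclideanSpace ℝ (Fin 2),
        g2dom h ∧ h ≠ 0 ∧ g2dom lam ∧ lam ≠ 0 ∧
        ∃ l : List ℕ, (∀ m ∈ l, m = 1 ∨ m = 2) ∧ l.length = k ∧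
          ⟪compG l lam, h⟫ < 0} 3 := by
  have h121 : ∀ m ∈ [1, 2, 1], m = 1 ∨ m = 2 := by decide
  have h212 : ∀ m ∈ [2, 1, 2], m = 1 ∨ m = 2 := by decide
  have hneg : ∀ lam, g2sdom lam →
      ⟪compG [1, 2, 1] lam, g2w1⟫ < 0 ∧ ⟪compG [2, 1, 2] lam, g2w2⟫ < 0 := fun lam hlam =>
    ⟨by rw [inner_compG_121_g2w1]; linarith [hlam.1],
      by rw [inner_compG_212_g2w2]; linarith [hlam.2]⟩
  refine ⟨fun h lam hh _ hlam _ l hl hlen => inner_compG_nonneg hh hlam hl hlen, hneg,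
    fun lam hlam => ⟨⟨⟨[1, 2, 1], h121, rfl, (hneg lam hlam).1⟩, ?_⟩,
      ⟨⟨[2, 1, 2], h212, rfl, (hneg lam hlam).2⟩, ?_⟩⟩,
    ⟨g2w1, g2w1, g2dom_g2w1, g2w1_ne_zero, g2dom_g2w1, g2w1_ne_zero, [1, 2, 1], h121, rfl, ?_⟩, ?_⟩
  · rintro k ⟨l, hl, rfl, hl_neg⟩
    exact three_le_length_of_inner_compG_neg g2dom_g2w1 (g2dom_of_g2sdom hlam) hl hl_neg
  · rintro k ⟨l, hl, rfl, hl_neg⟩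
    exact three_le_length_of_inner_compG_neg g2dom_g2w2 (g2dom_of_g2sdom hlam) hl hl_neg
  · rw [inner_compG_121_g2w1, inner_g2w1_g2a1]
    norm_num
  · rintro k ⟨h, lam, hh, -, hlam, -, l, hl, rfl, hl_neg⟩
    exact three_le_length_of_inner_compG_neg hh hlam hl hl_neg
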